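/- arXiv:2503.14680 — 2 statements merged into one kernel-verified Lean document; each statement's English description precedes it below -/
import Mathlib

section
/- For relatively prime odd positive integers m and n and any integer k, the Gauss-type sum satisfies the multiplicativity G_k(mn) = G_k(m)·G_k(n), where G_k(n) = ((1−i)/2 + (−1/n)·(1+i)/2)·∑_{a mod n} (a/n)·e(ak/n). -/
open Real Complex Finset

/-! Writing `a = x n + y m` (Chinese remainder theorem), `e(ak/mn) = e(xk/m) e(yk/n)` and
`(a/mn) = (n/m)(m/n)(x/m)(y/n)`, so the bare sums are multiplicative up to the sign
`(n/m)(m/n)`. By quadratic reciprocity that sign is `-1` exactly when `m ≡ n ≡ 3 (mod 4)`, and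
it is absorbed by the prefactor, which is `1` for `n ≡ 1` and `-i` for `n ≡ 3 (mod 4)`. -/

/-- The Gauss-type sum `G_k(n)` for odd `n`:
`G_k(n) = ((1−i)/2 + (−1/n)(1+i)/2) ∑_{a mod n} (a/n) e(ak/n)`. -/
noncomputable def Gk (k : ℤ) (n : ℕ) : ℂ :=
  ((1 - Complex.I) / 2 + (jacobiSym (-1) n : ℂ) * (1 + Complex.I) / 2) *
    ∑ a ∈ Finset.range n, (jacobiSym (a : ℤ) n : ℂ) *
      Complex.exp (2 * (π : ℂ) * Complex.I * (a : ℂ) * (k : ℂ) / (n : ℂ))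

theorem Function.Periodic.sum_range_mul_eq_sum_sum {M : Type*} [AddCommMonoid M] {f : ℕ → M}
    {m n : ℕ} (hf : Function.Periodic f (m * n)) (hmn : Nat.Coprime m n) :
    ∑ a ∈ range (m * n), f a = ∑ x ∈ range m, ∑ y ∈ range n, f (x * n + y * m) := by
  set g : ℕ × ℕ → ℕ := fun p => (p.1 * n + p.2 * m) % (m * n)
  have hg : Set.InjOn g (range m ×ˢ range n : Finset _) := by
    rintro ⟨x, y⟩ hxy ⟨x', y'⟩ hxy' hgg
    simp only [coe_product, coe_range, Set.mem_prod, Set.mem_Iio] at hxy hxy'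
    have hmod_m : x * n ≡ x' * n [MOD m] := by
      simpa [Nat.ModEq, Nat.add_mul_mod_self_right] using Nat.ModEq.of_mul_right n hgg
    have hmod_n : y * m ≡ y' * m [MOD n] := by
      simpa [Nat.ModEq, Nat.add_mul_mod_self_right] using Nat.ModEq.of_mul_left m hgg
    refine Prod.ext ?_ ?_
    · exact Nat.ModEq.eq_of_lt_of_lt (hmod_m.cancel_right_of_coprime hmn) hxy.1 hxy'.1
    · exact Nat.ModEq.eq_of_lt_of_lt (hmod_n.cancel_right_of_coprime hmn.symm) hxy.2 hxy'.2
  have himage : (range m ×ˢ range n).image g = range (m * n) := by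
    refine eq_of_subset_of_card_le ?_ ?_
    · intro a ha
      obtain ⟨p, hp, rfl⟩ := mem_image.mp ha
      simp only [mem_product, mem_range] at hp
      exact mem_range.mpr (Nat.mod_lt _ (Nat.mul_pos (by omega) (by omega)))
    · rw [card_image_of_injOn hg, card_product, card_range, card_range, card_range]
  rw [← himage, sum_image hg, sum_product]
  simp only [g, hf.map_mod_nat]

noncomputable def gaussFactor (n : ℕ) : ℂ :=
  (1 - I) / 2 + (jacobiSym (-1) n : ℂ) * (1 + I) / 2

noncomputable def jacobiExpTerm (k : ℤ) (n a : ℕ) : ℂ :=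
  (jacobiSym a n : ℂ) * exp (2 * π * I * a * k / n)

theorem Gk_eq (k : ℤ) (n : ℕ) :
    Gk k n = gaussFactor n * ∑ a ∈ range n, jacobiExpTerm k n a := rfl

theorem gaussFactor_of_mod_four_eq_one {n : ℕ} (hn : n % 4 = 1) : gaussFactor n = 1 := by
  rw [gaussFactor, jacobiSym.at_neg_one (Nat.odd_iff.mpr (Nat.odd_of_mod_four_eq_one hn)),
    ZMod.χ₄_nat_one_mod_four hn]
  push_cast
  ring

theorem gaussFactor_of_mod_four_eq_three {n : ℕ} (hn : n % 4 = 3) : gaussFactor n = -I := by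
  rw [gaussFactor, jacobiSym.at_neg_one (Nat.odd_iff.mpr (Nat.odd_of_mod_four_eq_three hn)),
    ZMod.χ₄_nat_three_mod_four hn]
  push_cast
  ring

theorem gaussFactor_mul {m n : ℕ} (hm : Odd m) (hn : Odd n) (hmn : Nat.Coprime m n) :
    gaussFactor (m * n) * (jacobiSym n m * jacobiSym m n : ℤ) =
      gaussFactor m * gaussFactor n := by
  have hsq : jacobiSym n m * jacobiSym n m = 1 := by
    rw [← sq]; exact jacobiSym.sq_one (by simpa using hmn.symm)
  rcases Nat.odd_mod_four_iff.mp (Nat.odd_iff.mp hm) with hm4 | hm4 <;>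
    rcases Nat.odd_mod_four_iff.mp (Nat.odd_iff.mp hn) with hn4 | hn4
  · rw [jacobiSym.quadratic_reciprocity_one_mod_four hm4 hn, hsq,
      gaussFactor_of_mod_four_eq_one (by simp [Nat.mul_mod, hm4, hn4]),
      gaussFactor_of_mod_four_eq_one hm4, gaussFactor_of_mod_four_eq_one hn4]
    simp
  · rw [jacobiSym.quadratic_reciprocity_one_mod_four hm4 hn, hsq,
      gaussFactor_of_mod_four_eq_three (by simp [Nat.mul_mod, hm4, hn4]),
      gaussFactor_of_mod_four_eq_one hm4, gaussFactor_of_mod_four_eq_three hn4]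
    simp
  · rw [jacobiSym.quadratic_reciprocity_one_mod_four' hm hn4, hsq,
      gaussFactor_of_mod_four_eq_three (by simp [Nat.mul_mod, hm4, hn4]),
      gaussFactor_of_mod_four_eq_three hm4, gaussFactor_of_mod_four_eq_one hn4]
    simp
  · rw [jacobiSym.quadratic_reciprocity_three_mod_four hm4 hn4, mul_neg, hsq,
      gaussFactor_of_mod_four_eq_one (by simp [Nat.mul_mod, hm4, hn4]),
      gaussFactor_of_mod_four_eq_three hm4, gaussFactor_of_mod_four_eq_three hn4]
    simp

theorem jacobiExpTerm_periodic (k : ℤ) (n : ℕ) : Function.Periodic (jacobiExpTerm k n) n := by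
  intro a
  rcases eq_or_ne n 0 with rfl | hn
  · simp
  have hexp : 2 * π * I * ((a + n : ℕ) : ℂ) * k / n = 2 * π * I * a * k / n + k * (2 * π * I) := by
    push_cast; field_simp
  rw [jacobiExpTerm, jacobiExpTerm, hexp, Complex.exp_add, exp_int_mul_two_pi_mul_I, mul_one,
    jacobiSym.mod_left' (b := n) (a₂ := a) (by push_cast; simp)]

theorem jacobiSym_mul_add_mul (x y : ℤ) {m n : ℕ} (hm : m ≠ 0) (hn : n ≠ 0) :
    jacobiSym (x * n + y * m) (m * n) =
      jacobiSym n m * jacobiSym m n * (jacobiSym x m * jacobiSym y n) := by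
  rw [jacobiSym.mul_right' _ hm hn, jacobiSym.mod_left' (a₂ := x * n) (by simp),
    jacobiSym.mod_left' (b := n) (a₂ := y * m) (by simp), jacobiSym.mul_left, jacobiSym.mul_left]
  ring

theorem jacobiExpTerm_mul_add_mul (k : ℤ) {m n : ℕ} (hm : m ≠ 0) (hn : n ≠ 0) (x y : ℕ) :
    jacobiExpTerm k (m * n) (x * n + y * m) =
      (jacobiSym n m * jacobiSym m n : ℤ) * (jacobiExpTerm k m x * jacobiExpTerm k n y) := by
  have hexp : 2 * π * I * ((x * n + y * m : ℕ) : ℂ) * k / (m * n : ℕ) =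
      2 * π * I * x * k / m + 2 * π * I * y * k / n := by
    push_cast; field_simp
  rw [jacobiExpTerm, jacobiExpTerm, jacobiExpTerm, hexp, Complex.exp_add]
  push_cast
  rw [jacobiSym_mul_add_mul x y hm hn]
  push_cast
  ring

theorem sum_jacobiExpTerm_mul (k : ℤ) {m n : ℕ} (hm : m ≠ 0) (hn : n ≠ 0)
    (hmn : Nat.Coprime m n) :
    ∑ a ∈ range (m * n), jacobiExpTerm k (m * n) a =
      (jacobiSym n m * jacobiSym m n : ℤ) *
        ((∑ x ∈ range m, jacobiExpTerm k m x) * ∑ y ∈ range n, jacobiExpTerm k n y) := by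
  rw [(jacobiExpTerm_periodic k (m * n)).sum_range_mul_eq_sum_sum hmn, sum_mul_sum, mul_sum]
  refine sum_congr rfl fun x _ => ?_
  rw [mul_sum]
  exact sum_congr rfl fun y _ => jacobiExpTerm_mul_add_mul k hm hn x y

theorem stmt7_general (m n : ℕ) (hmo : Odd m) (hno : Odd n)
    (hcop : Nat.Coprime m n) (k : ℤ) :
    Gk k (m * n) = Gk k m * Gk k n := by
  rw [Gk_eq, Gk_eq, Gk_eq, sum_jacobiExpTerm_mul k hmo.pos.ne' hno.pos.ne' hcop,
    ← mul_assoc, gaussFactor_mul hmo hno hcop]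
  ring

/-- for relatively prime odd positive integers `m`, `n` and any integer `k`,
`G_k(mn) = G_k(m) G_k(n)`. -/
theorem stmt7 (m n : ℕ) (hm : 0 < m) (hn : 0 < n) (hmo : Odd m) (hno : Odd n)
    (hcop : Nat.Coprime m n) (k : ℤ) :
    Gk k (m * n) = Gk k m * Gk k n :=
  stmt7_general m n hmo hno hcop k
end

section
/- For any odd positive integer n and any integer k, G_{4k}(n) = G_k(n), where G_k(n) = ((1−i)/2 + (−1/n)·(1+i)/2)·∑_{a mod n} (a/n)·e(ak/n). -/
open Real Complex Finset

/-! Since `n` is odd, `4 = 2²` is a unit mod `n` with `(4/n) = 1`. Substituting `a ↦ 4a` permutes the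
residues mod `n`, and the summand `(a/n) e(ak/n)` is `n`-periodic in `a`, so
`∑ (a/n) e(4ak/n) = ∑ (4a/n) e(4ak/n) = ∑ (a/n) e(ak/n)`. -/

theorem Function.Periodic.eq_of_intCast_eq {M : Type*} {f : ℤ → M} {n : ℕ}
    (hf : Function.Periodic f n) {a b : ℤ} (h : (a : ZMod n) = b) : f a = f b := by
  obtain ⟨t, ht⟩ := (ZMod.intCast_eq_intCast_iff_dvd_sub a b n).mp h
  rw [show b = a + t * n by linarith]
  exact ((hf.int_mul t) a).symm

theorem Finset.sum_range_eq_sum_zmod_val {M : Type*} [AddCommMonoid M] (n : ℕ) [NeZero n]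
    (f : ℕ → M) : ∑ a ∈ range n, f a = ∑ x : ZMod n, f x.val := by
  obtain ⟨m, rfl⟩ := Nat.exists_eq_succ_of_ne_zero (NeZero.ne n)
  exact (Fin.sum_univ_eq_sum_range f _).symm

theorem Function.Periodic.sum_range_mul_left {M : Type*} [AddCommMonoid M] {f : ℤ → M} {n : ℕ}
    (hf : Function.Periodic f n) {c : ℤ} (hc : IsCoprime c n) :
    ∑ a ∈ range n, f (c * a) = ∑ a ∈ range n, f a := by
  rcases n.eq_zero_or_pos with rfl | hn
  · simp
  have : NeZero n := ⟨hn.ne'⟩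
  set u := ZMod.unitOfIsCoprime c hc
  calc ∑ a ∈ range n, f (c * a) = ∑ x : ZMod n, f (u * x).val := by
        rw [sum_range_eq_sum_zmod_val n (fun a => f (c * a))]
        refine Fintype.sum_congr _ _ fun x => hf.eq_of_intCast_eq ?_
        push_cast
        rw [ZMod.natCast_zmod_val, ZMod.natCast_zmod_val, ZMod.coe_unitOfIsCoprime]
    _ = ∑ x : ZMod n, f x.val := Equiv.sum_comp (Units.mulLeft u) fun x : ZMod n => f x.val
    _ = ∑ a ∈ range n, f a := (sum_range_eq_sum_zmod_val n (fun a => f a)).symm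

theorem jacobiSym_periodic (n : ℕ) : Function.Periodic (fun a : ℤ => jacobiSym a n) n :=
  fun a => jacobiSym.mod_left' (Int.add_emod_right a n)

theorem periodic_cexp_two_pi_I_mul_mul_div (k : ℤ) {n : ℕ} (hn : n ≠ 0) :
    Function.Periodic (fun a : ℤ => cexp (2 * π * I * a * k / n)) n := by
  intro a
  have hn' : (n : ℂ) ≠ 0 := Nat.cast_ne_zero.mpr hn
  simp only
  rw [show 2 * π * I * ((a + n : ℤ) : ℂ) * k / n = 2 * π * I * a * k / n + k * (2 * π * I) by
      push_cast; field_simp,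
    Complex.exp_add, exp_int_mul_two_pi_mul_I, mul_one]

theorem isCoprime_four_of_odd {n : ℕ} (hn : Odd n) : IsCoprime (4 : ℤ) n := by
  have h2 : IsCoprime (2 : ℤ) n :=
    Int.isCoprime_iff_gcd_eq_one.mpr (Nat.coprime_two_left.mpr hn)
  simpa using h2.pow_left (m := 2)

theorem jacobiSym_four_left_of_odd {n : ℕ} (hn : Odd n) : jacobiSym 4 n = 1 := by
  rw [show (4 : ℤ) = 2 ^ 2 by norm_num]
  exact jacobiSym.sq_one' (Nat.coprime_two_left.mpr hn)

theorem stmt8_general (n : ℕ) (hno : Odd n) (k : ℤ) :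
    Gk (4 * k) n = Gk k n := by
  set f : ℤ → ℂ := fun a => (jacobiSym a n : ℂ) * cexp (2 * π * I * a * k / n)
  have hf : Function.Periodic f n :=
    ((jacobiSym_periodic n).comp _).mul (periodic_cexp_two_pi_I_mul_mul_div k hno.pos.ne')
  unfold Gk
  congr 1
  calc ∑ a ∈ range n, (jacobiSym a n : ℂ) * cexp (2 * π * I * a * (4 * k : ℤ) / n)
      = ∑ a ∈ range n, f (4 * a) := by
        refine sum_congr rfl fun a _ => ?_
        simp only [f, jacobiSym.mul_left, jacobiSym_four_left_of_odd hno, one_mul]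
        push_cast
        ring_nf
    _ = ∑ a ∈ range n, f a := hf.sum_range_mul_left (isCoprime_four_of_odd hno)

/-- for any odd positive integer `n` and any integer `k`,
`G_{4k}(n) = G_k(n)`. -/
theorem stmt8 (n : ℕ) (hn : 0 < n) (hno : Odd n) (k : ℤ) :
    Gk (4 * k) n = Gk k n :=
  stmt8_general n hno k
end
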